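/- Subcriticality criterion: in the Derrida–Retaux model with N ≤ M almost surely (M integer ≥ 2), if (M − 1)·s₀·F'_0(s₀) − a·F_0(s₀) < 0 where s₀ = 1 + (M−1)/a, then Q = lim_n E[X_n]/(E[N])^n = 0. -/

import Mathlib

open scoped ENNReal NNReal
open Filter

/-- Convolution of two `PMF`s on `ℕ`: law of the sum of independent variables. -/
noncomputable def pmfConv (μ ν : PMF ℕ) : PMF ℕ := μ.bind fun x => ν.map (x + ·)

/-- Law of the sum of `n` i.i.d. copies of a variable with law `μ`. -/
noncomputable def iidSum (μ : PMF ℕ) : ℕ → PMF ℕ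
  | 0 => PMF.pure 0
  | n + 1 => pmfConv μ (iidSum μ n)

/-- One step of the Derrida–Retaux recursion:
law of `(X^(1) + ⋯ + X^(N) - a)⁺` (truncated ℕ-subtraction is the positive part). -/
noncomputable def drStep (ν : PMF ℕ) (a : ℕ) (μ : PMF ℕ) : PMF ℕ :=
  (ν.bind fun n => iidSum μ n).map fun y => y - a

/-- The Derrida–Retaux sequence of laws: `drSeq ν μ0 a n` is the law of `X_n`. -/
noncomputable def drSeq (ν μ0 : PMF ℕ) (a : ℕ) : ℕ → PMF ℕ
  | 0 => μ0
  | n + 1 => drStep ν a (drSeq ν μ0 a n)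

/-- Mean (expectation) of a `PMF` on `ℕ`, with values in `ℝ≥0∞`. -/
noncomputable def pmfMean (μ : PMF ℕ) : ℝ≥0∞ := ∑' k : ℕ, μ k * k

/-- Moment generating (probability generating) function `s ↦ E[s^X]` of a `PMF` on `ℕ`,
as a real-valued function (the sum of the series when it converges). -/
noncomputable def genFun (μ : PMF ℕ) (s : ℝ) : ℝ := ∑' k : ℕ, (μ k).toReal * s ^ k

/-!
Put `c = M - 1`, `t = s₀ = 1 + c / a`, `F(t) = E[t^X]` and `G(t) = E[X t^X] = t F'(t)`.
The inequality `c G(t) ≤ a F(t)` propagates along the recursion: adding at most `M`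
i.i.d. copies turns it into `c G ≤ M a F`, and the truncation `y ↦ (y - a)⁺` brings it back
to `c G ≤ a F`, with equality termwise for `y ≥ a` and by Bernoulli's inequality
`a + c j ≤ a (1 + c / a) ^ j` for `y = a - j < a`. As `t ≥ 1`, the variables `X` and `t^X`
are positively correlated, so `E[X] F(t) ≤ G(t)` and hence `c E[X_n] ≤ a` for all `n`,
while `E[N]^n → ∞`.
-/

namespace PMF

variable {α β : Type*}

lemma tsum_bind_mul (μ : PMF α) (f : α → PMF β) (g : β → ℝ≥0∞) :
    ∑' y, μ.bind f y * g y = ∑' x, μ x * ∑' y, f x y * g y := by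
  simp only [bind_apply, ← ENNReal.tsum_mul_right, ← ENNReal.tsum_mul_left, mul_assoc]
  exact ENNReal.tsum_comm

lemma tsum_pure_mul (x : α) (g : α → ℝ≥0∞) : ∑' y, pure x y * g y = g x := by
  simp [pure_apply]

lemma tsum_map_mul (μ : PMF α) (f : α → β) (g : β → ℝ≥0∞) :
    ∑' y, μ.map f y * g y = ∑' x, μ x * g (f x) := by
  simp only [map, tsum_bind_mul, Function.comp_apply, tsum_pure_mul]

end PMF

lemma ENNReal.tsum_mul_tsum {α β : Type*} (f : α → ℝ≥0∞) (g : β → ℝ≥0∞) :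
    (∑' i, f i) * ∑' j, g j = ∑' i, ∑' j, f i * g j := by
  rw [← ENNReal.tsum_mul_right]
  simp_rw [← ENNReal.tsum_mul_left]

lemma tsum_pmfConv_mul (μ ρ : PMF ℕ) (g : ℕ → ℝ≥0∞) :
    ∑' k, pmfConv μ ρ k * g k = ∑' x, μ x * ∑' y, ρ y * g (x + y) := by
  simp only [pmfConv, PMF.tsum_bind_mul, PMF.tsum_map_mul]

/-- `F(t) = E[t^X]`, computed in `ℝ≥0∞` so that no summability has to be tracked. -/
noncomputable def tiltedMass (μ : PMF ℕ) (t : ℝ≥0∞) : ℝ≥0∞ := ∑' k, μ k * t ^ k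

/-- `G(t) = E[X t^X] = t F'(t)`. -/
noncomputable def tiltedMean (μ : PMF ℕ) (t : ℝ≥0∞) : ℝ≥0∞ := ∑' k, μ k * (k * t ^ k)

section Tilted

variable (t : ℝ≥0∞)

lemma tiltedMass_pmfConv (μ ρ : PMF ℕ) :
    tiltedMass (pmfConv μ ρ) t = tiltedMass μ t * tiltedMass ρ t := by
  simp only [tiltedMass, tsum_pmfConv_mul]
  rw [ENNReal.tsum_mul_tsum]
  refine tsum_congr fun x => ?_
  rw [← ENNReal.tsum_mul_left]
  exact tsum_congr fun y => by ring

lemma tiltedMean_pmfConv (μ ρ : PMF ℕ) :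
    tiltedMean (pmfConv μ ρ) t =
      tiltedMean μ t * tiltedMass ρ t + tiltedMass μ t * tiltedMean ρ t := by
  simp only [tiltedMean, tiltedMass, tsum_pmfConv_mul]
  rw [ENNReal.tsum_mul_tsum, ENNReal.tsum_mul_tsum, ← ENNReal.tsum_add]
  refine tsum_congr fun x => ?_
  rw [← ENNReal.tsum_mul_left, ← ENNReal.tsum_add]
  exact tsum_congr fun y => by push_cast; ring

lemma tiltedMass_iidSum (μ : PMF ℕ) (n : ℕ) : tiltedMass (iidSum μ n) t = tiltedMass μ t ^ n := by
  induction n with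
  | zero => simp [iidSum, tiltedMass]
  | succ n ih => rw [iidSum, tiltedMass_pmfConv, ih, pow_succ']

lemma mul_tiltedMean_iidSum_le {μ : PMF ℕ} {c b : ℝ≥0∞}
    (h : c * tiltedMean μ t ≤ b * tiltedMass μ t) (n : ℕ) :
    c * tiltedMean (iidSum μ n) t ≤ n * b * tiltedMass (iidSum μ n) t := by
  induction n with
  | zero => simp [iidSum, tiltedMean]
  | succ n ih =>
    rw [iidSum, tiltedMean_pmfConv, tiltedMass_pmfConv]
    calc c * (tiltedMean μ t * tiltedMass (iidSum μ n) t
          + tiltedMass μ t * tiltedMean (iidSum μ n) t)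
        = c * tiltedMean μ t * tiltedMass (iidSum μ n) t
          + tiltedMass μ t * (c * tiltedMean (iidSum μ n) t) := by ring
      _ ≤ b * tiltedMass μ t * tiltedMass (iidSum μ n) t
          + tiltedMass μ t * (n * b * tiltedMass (iidSum μ n) t) := by gcongr
      _ = (n + 1 : ℕ) * b * (tiltedMass μ t * tiltedMass (iidSum μ n) t) := by push_cast; ring

variable {t}

lemma one_le_tiltedMass (ht : 1 ≤ t) (μ : PMF ℕ) : 1 ≤ tiltedMass μ t :=
  calc 1 = ∑' k, μ k := μ.tsum_coe.symm
    _ ≤ tiltedMass μ t :=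
      ENNReal.tsum_le_tsum fun _ => le_mul_of_one_le_right zero_le (one_le_pow₀ ht)

/-- Mathlib's `mul_add_mul_le_mul_add_mul` needs cancellative addition, which `ℝ≥0∞` lacks. -/
lemma ENNReal.mul_add_mul_le_mul_add_mul {a b c d : ℝ≥0∞} (hab : a ≤ b) (hcd : c ≤ d) :
    a * d + b * c ≤ a * c + b * d := by
  obtain ⟨e, rfl⟩ := exists_add_of_le hab
  obtain ⟨f, rfl⟩ := exists_add_of_le hcd
  calc a * (c + f) + (a + e) * c = 2 * (a * c) + a * f + e * c := by ring
    _ ≤ 2 * (a * c) + a * f + e * c + e * f := le_self_add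
    _ = a * c + (a + e) * (c + f) := by ring

lemma cast_mul_pow_add_cast_mul_pow_le (ht : 1 ≤ t) (k j : ℕ) :
    (k : ℝ≥0∞) * t ^ j + j * t ^ k ≤ k * t ^ k + j * t ^ j := by
  rcases le_total k j with hkj | hjk
  · exact ENNReal.mul_add_mul_le_mul_add_mul (Nat.cast_le.mpr hkj) (pow_le_pow_right₀ ht hkj)
  · rw [add_comm, add_comm (k * t ^ k : ℝ≥0∞)]
    exact ENNReal.mul_add_mul_le_mul_add_mul (Nat.cast_le.mpr hjk) (pow_le_pow_right₀ ht hjk)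

/-- Chebyshev's correlation inequality: `X` and `t^X` are comonotone. -/
lemma pmfMean_mul_tiltedMass_le (ht : 1 ≤ t) (μ : PMF ℕ) :
    pmfMean μ * tiltedMass μ t ≤ tiltedMean μ t := by
  have hMF : pmfMean μ * tiltedMass μ t = ∑' k, ∑' j, μ k * μ j * (k * t ^ j) := by
    simp only [pmfMean, tiltedMass, ENNReal.tsum_mul_tsum]
    exact tsum_congr fun k => tsum_congr fun j => by ring
  have hMF' : pmfMean μ * tiltedMass μ t = ∑' k, ∑' j, μ k * μ j * (j * t ^ k) := by
    rw [hMF, ENNReal.tsum_comm]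
    exact tsum_congr fun k => tsum_congr fun j => by ring
  have hG : tiltedMean μ t = ∑' k, ∑' j, μ k * μ j * (k * t ^ k) := by
    rw [← mul_one (tiltedMean μ t), ← μ.tsum_coe, tiltedMean, ENNReal.tsum_mul_tsum]
    exact tsum_congr fun k => tsum_congr fun j => by ring
  have hG' : tiltedMean μ t = ∑' k, ∑' j, μ k * μ j * (j * t ^ j) := by
    rw [hG, ENNReal.tsum_comm]
    exact tsum_congr fun k => tsum_congr fun j => by ring
  have h2 : 2 * (pmfMean μ * tiltedMass μ t) ≤ 2 * tiltedMean μ t :=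
    calc 2 * (pmfMean μ * tiltedMass μ t)
        = ∑' k, ∑' j, μ k * μ j * (k * t ^ j) + ∑' k, ∑' j, μ k * μ j * (j * t ^ k) := by
          rw [← hMF, ← hMF', two_mul]
      _ ≤ ∑' k, ∑' j, μ k * μ j * (k * t ^ k) + ∑' k, ∑' j, μ k * μ j * (j * t ^ j) := by
          rw [← ENNReal.tsum_add, ← ENNReal.tsum_add]
          refine ENNReal.tsum_le_tsum fun k => ?_
          rw [← ENNReal.tsum_add, ← ENNReal.tsum_add]
          refine ENNReal.tsum_le_tsum fun j => ?_
          rw [← mul_add, ← mul_add]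
          exact mul_le_mul_right (cast_mul_pow_add_cast_mul_pow_le ht k j) _
      _ = 2 * tiltedMean μ t := by rw [← hG, ← hG', two_mul]
  exact (ENNReal.mul_le_mul_iff_right two_ne_zero ENNReal.ofNat_ne_top).mp h2

end Tilted

section Truncation

variable {a c : ℕ} {t : ℝ≥0∞}

lemma natCast_add_mul_le_mul_pow (ha : a ≠ 0) (ht : t = 1 + c / a) (j : ℕ) :
    (a : ℝ≥0∞) + c * j ≤ a * t ^ j := by
  have hac : (a : ℝ≥0∞) * (c / a) = c :=
    ENNReal.mul_div_cancel (Nat.cast_ne_zero.mpr ha) (ENNReal.natCast_ne_top a)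
  calc (a : ℝ≥0∞) + c * j = a * (1 + j * (c / a)) := by rw [mul_add, mul_left_comm, hac]; ring
    _ ≤ a * t ^ j := by
      rw [ht]
      gcongr
      exact one_add_mul_le_pow_of_sq_nonneg zero_le zero_le zero_le j

/-- The truncation step `c G ≤ (c + 1) a F ⟹ c G ≤ a F` for `y ↦ (y - a)⁺`, termwise and
multiplied by `t ^ a`. -/
lemma truncation_termwise_le (ha : a ≠ 0) (ht : t = 1 + c / a) (y : ℕ) :
    (c : ℝ≥0∞) * (y - a : ℕ) * t ^ (y - a) * t ^ a + (c + 1 : ℕ) * a * t ^ y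
      ≤ a * t ^ (y - a) * t ^ a + c * y * t ^ y := by
  rcases le_or_gt a y with hay | hya
  · obtain ⟨j, rfl⟩ := exists_add_of_le hay
    rw [Nat.add_sub_cancel_left, pow_add]
    exact le_of_eq (by push_cast; ring)
  · obtain ⟨j, rfl⟩ := exists_add_of_le hya.le
    have hbern := natCast_add_mul_le_mul_pow ha ht j
    rw [Nat.sub_eq_zero_of_le (Nat.le_add_right y j), pow_add]
    calc (c : ℝ≥0∞) * (0 : ℕ) * t ^ 0 * (t ^ y * t ^ j) + (c + 1 : ℕ) * (y + j : ℕ) * t ^ y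
        = ((y + j : ℕ) + c * j) * t ^ y + c * y * t ^ y := by push_cast; ring
      _ ≤ ((y + j : ℕ) * t ^ j) * t ^ y + c * y * t ^ y := by gcongr
      _ = (y + j : ℕ) * t ^ 0 * (t ^ y * t ^ j) + c * y * t ^ y := by ring

lemma mul_tiltedMean_map_tsub_le (ha : a ≠ 0) (ht : t = 1 + c / a) {π : PMF ℕ}
    (hπ : tiltedMass π t ≠ ⊤) (h : c * tiltedMean π t ≤ (c + 1 : ℕ) * a * tiltedMass π t) :
    c * tiltedMean (π.map (· - a)) t ≤ a * tiltedMass (π.map (· - a)) t := by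
  have hsum : c * tiltedMean (π.map (· - a)) t * t ^ a + (c + 1 : ℕ) * a * tiltedMass π t
      ≤ a * tiltedMass (π.map (· - a)) t * t ^ a + c * tiltedMean π t := by
    simp only [tiltedMean, tiltedMass, PMF.tsum_map_mul, ← ENNReal.tsum_mul_left,
      ← ENNReal.tsum_mul_right, ← ENNReal.tsum_add]
    refine ENNReal.tsum_le_tsum fun y => ?_
    calc _ = π y * ((c : ℝ≥0∞) * (y - a : ℕ) * t ^ (y - a) * t ^ a
          + (c + 1 : ℕ) * a * t ^ y) := by ring
      _ ≤ π y * (a * t ^ (y - a) * t ^ a + c * y * t ^ y) :=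
          mul_le_mul_right (truncation_termwise_le ha ht y) _
      _ = _ := by ring
  have ht_top : t ≠ ⊤ := by
    rw [ht]
    exact ENNReal.add_ne_top.mpr ⟨ENNReal.one_ne_top,
      ENNReal.div_ne_top (ENNReal.natCast_ne_top c) (Nat.cast_ne_zero.mpr ha)⟩
  have hta : t ^ a ≠ 0 := pow_ne_zero a (zero_lt_one.trans_le (ht ▸ le_self_add)).ne'
  have hcancel := (ENNReal.add_le_add_iff_right (by finiteness)).mp
    (hsum.trans (add_le_add le_rfl h))
  exact (ENNReal.mul_le_mul_iff_left hta (ENNReal.pow_ne_top ht_top)).mp hcancel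

lemma tiltedMass_map_tsub_le (ht : 1 ≤ t) (π : PMF ℕ) (a : ℕ) :
    tiltedMass (π.map (· - a)) t ≤ tiltedMass π t := by
  rw [tiltedMass, PMF.tsum_map_mul]
  exact ENNReal.tsum_le_tsum fun y => mul_le_mul_right (pow_le_pow_right₀ ht (Nat.sub_le y a)) _

end Truncation

section Branching

variable {t : ℝ≥0∞} {ν : PMF ℕ} {M : ℕ}

lemma tiltedMass_bind (f : ℕ → PMF ℕ) :
    tiltedMass (ν.bind f) t = ∑' n, ν n * tiltedMass (f n) t :=
  PMF.tsum_bind_mul _ _ _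

lemma tiltedMean_bind (f : ℕ → PMF ℕ) :
    tiltedMean (ν.bind f) t = ∑' n, ν n * tiltedMean (f n) t :=
  PMF.tsum_bind_mul _ _ _

lemma tiltedMass_bind_iidSum_le (ht : 1 ≤ t) (hν : ∀ k, M < k → ν k = 0) (μ : PMF ℕ) :
    tiltedMass (ν.bind (iidSum μ)) t ≤ tiltedMass μ t ^ M := by
  rw [tiltedMass_bind]
  calc ∑' n, ν n * tiltedMass (iidSum μ n) t ≤ ∑' n, ν n * tiltedMass μ t ^ M := by
        refine ENNReal.tsum_le_tsum fun n => ?_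
        rw [tiltedMass_iidSum]
        rcases le_or_gt n M with hn | hn
        · exact mul_le_mul_right (pow_le_pow_right₀ (one_le_tiltedMass ht μ) hn) _
        · simp [hν n hn]
    _ = tiltedMass μ t ^ M := by rw [ENNReal.tsum_mul_right, ν.tsum_coe, one_mul]

lemma mul_tiltedMean_bind_iidSum_le (hν : ∀ k, M < k → ν k = 0) {μ : PMF ℕ} {c b : ℝ≥0∞}
    (h : c * tiltedMean μ t ≤ b * tiltedMass μ t) :
    c * tiltedMean (ν.bind (iidSum μ)) t ≤ M * b * tiltedMass (ν.bind (iidSum μ)) t := by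
  rw [tiltedMean_bind, tiltedMass_bind, ← ENNReal.tsum_mul_left, ← ENNReal.tsum_mul_left]
  refine ENNReal.tsum_le_tsum fun n => ?_
  rcases le_or_gt n M with hn | hn
  · calc c * (ν n * tiltedMean (iidSum μ n) t) = ν n * (c * tiltedMean (iidSum μ n) t) := by ring
      _ ≤ ν n * (n * b * tiltedMass (iidSum μ n) t) :=
          mul_le_mul_right (mul_tiltedMean_iidSum_le t h n) _
      _ ≤ ν n * (M * b * tiltedMass (iidSum μ n) t) := by gcongr
      _ = M * b * (ν n * tiltedMass (iidSum μ n) t) := by ring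
  · simp [hν n hn]

end Branching

/-- The paper's `D(s) ≤ 0`, where `D(s) = (M - 1) s F'(s) - a F(s)`, at `s = t` and with
`c = M - 1`; finiteness of `F(t)` is part of it. -/
def DNonpos (a c : ℕ) (t : ℝ≥0∞) (μ : PMF ℕ) : Prop :=
  tiltedMass μ t ≠ ⊤ ∧ c * tiltedMean μ t ≤ a * tiltedMass μ t

namespace DNonpos

variable {a c : ℕ} {t : ℝ≥0∞} {ν μ : PMF ℕ}

lemma drStep (ha : a ≠ 0) (ht : t = 1 + c / a) (hν : ∀ k, c + 1 < k → ν k = 0)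
    (h : DNonpos a c t μ) : DNonpos a c t (drStep ν a μ) := by
  have ht1 : 1 ≤ t := ht ▸ le_self_add
  have hπ : tiltedMass (ν.bind (iidSum μ)) t ≠ ⊤ :=
    ne_top_of_le_ne_top (ENNReal.pow_ne_top h.1) (tiltedMass_bind_iidSum_le ht1 hν μ)
  exact ⟨ne_top_of_le_ne_top hπ (tiltedMass_map_tsub_le ht1 _ a),
    mul_tiltedMean_map_tsub_le ha ht hπ (mul_tiltedMean_bind_iidSum_le hν h.2)⟩

lemma drSeq (ha : a ≠ 0) (ht : t = 1 + c / a) (hν : ∀ k, c + 1 < k → ν k = 0)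
    (h : DNonpos a c t μ) (n : ℕ) : DNonpos a c t (drSeq ν μ a n) := by
  induction n with
  | zero => exact h
  | succ n ih => exact ih.drStep ha ht hν

lemma mul_pmfMean_le (ht : 1 ≤ t) (h : DNonpos a c t μ) : c * pmfMean μ ≤ a := by
  have hF : tiltedMass μ t ≠ 0 := (zero_lt_one.trans_le (one_le_tiltedMass ht μ)).ne'
  refine (ENNReal.mul_le_mul_iff_left hF h.1).mp ?_
  calc c * pmfMean μ * tiltedMass μ t = c * (pmfMean μ * tiltedMass μ t) := mul_assoc _ _ _
    _ ≤ c * tiltedMean μ t := mul_le_mul_right (pmfMean_mul_tiltedMass_le ht μ) _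
    _ ≤ a * tiltedMass μ t := h.2

end DNonpos

section GenFun

open Finset Set

variable {μ : PMF ℕ} {s : ℝ}

lemma genFun_sub_sum_range_monotoneOn (hF : Summable fun k => (μ k).toReal * s ^ k) (K : ℕ) :
    MonotoneOn (fun u => genFun μ u - ∑ k ∈ range K, (μ k).toReal * u ^ k) (Icc 0 s) := by
  have hsum : ∀ u ∈ Icc 0 s, Summable fun k => (μ k).toReal * u ^ k := fun u hu =>
    hF.of_nonneg_of_le (fun k => mul_nonneg ENNReal.toReal_nonneg (pow_nonneg hu.1 k))
      fun k => by gcongr; exacts [hu.1, hu.2]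
  intro u hu v hv huv
  have htail : ∑ k ∈ range K, ((μ k).toReal * v ^ k - (μ k).toReal * u ^ k)
      ≤ genFun μ v - genFun μ u := by
    rw [genFun, genFun, ← (hsum v hv).tsum_sub (hsum u hu)]
    exact ((hsum v hv).sub (hsum u hu)).sum_le_tsum _
      fun k _ => sub_nonneg.mpr (by gcongr; exact hu.1)
  rw [sum_sub_distrib] at htail
  dsimp only
  linarith

/-- The derivative of a power series with nonnegative coefficients dominates the derivatives
of its partial sums, even at the boundary of the disc of convergence. -/
lemma sum_range_le_deriv_genFun (hs : 0 < s) (hF : Summable fun k => (μ k).toReal * s ^ k)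
    (hd : DifferentiableAt ℝ (genFun μ) s) (K : ℕ) :
    ∑ k ∈ range K, (μ k).toReal * (k * s ^ (k - 1)) ≤ deriv (genFun μ) s := by
  have hp : HasDerivAt (fun u => ∑ k ∈ range K, (μ k).toReal * u ^ k)
      (∑ k ∈ range K, (μ k).toReal * (k * s ^ (k - 1))) s :=
    HasDerivAt.fun_sum fun k _ => (hasDerivAt_pow k s).const_mul _
  have hacc : AccPt s (𝓟 (Icc 0 s)) := by
    rw [accPt_principal_iff_nhdsWithin, Icc_sdiff_right]
    exact right_nhdsWithin_Ico_neBot hs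
  have := (hd.hasDerivAt.sub hp).hasDerivWithinAt.nonneg_of_monotoneOn hacc
    (genFun_sub_sum_range_monotoneOn hF K)
  linarith

lemma tiltedMass_ofReal (hs : 0 ≤ s) (hF : Summable fun k => (μ k).toReal * s ^ k) :
    tiltedMass μ (ENNReal.ofReal s) = ENNReal.ofReal (genFun μ s) := by
  rw [genFun, ENNReal.ofReal_tsum_of_nonneg
    (fun k => mul_nonneg ENNReal.toReal_nonneg (pow_nonneg hs k)) hF]
  refine tsum_congr fun k => ?_
  rw [ENNReal.ofReal_mul ENNReal.toReal_nonneg, ENNReal.ofReal_toReal (μ.apply_ne_top k),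
    ENNReal.ofReal_pow hs]

lemma tiltedMean_ofReal_le (hs : 0 < s) (hF : Summable fun k => (μ k).toReal * s ^ k)
    (hd : DifferentiableAt ℝ (genFun μ) s) :
    tiltedMean μ (ENNReal.ofReal s) ≤ ENNReal.ofReal (s * deriv (genFun μ) s) := by
  refine ENNReal.tsum_le_of_sum_range_le fun K => ?_
  have hterm (k : ℕ) : μ k * (k * ENNReal.ofReal s ^ k)
      = ENNReal.ofReal (s * ((μ k).toReal * (k * s ^ (k - 1)))) := by
    rw [← ENNReal.ofReal_natCast, ← ENNReal.ofReal_pow hs.le, ← ENNReal.ofReal_mul (by positivity),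
      ← ENNReal.ofReal_toReal (μ.apply_ne_top k), ← ENNReal.ofReal_mul ENNReal.toReal_nonneg,
      ENNReal.toReal_ofReal ENNReal.toReal_nonneg]
    congr 1
    rcases k with _ | k
    · simp
    · rw [Nat.add_sub_cancel, pow_succ]
      ring
  rw [sum_congr rfl fun k _ => hterm k, ← ENNReal.ofReal_sum_of_nonneg
    fun k _ => by positivity, ← mul_sum]
  exact ENNReal.ofReal_le_ofReal
    (mul_le_mul_of_nonneg_left (sum_range_le_deriv_genFun hs hF hd K) hs.le)

lemma dNonpos_ofReal {a c : ℕ} (hs : 0 < s) (hF : Summable fun k => (μ k).toReal * s ^ k)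
    (hd : DifferentiableAt ℝ (genFun μ) s) (hD : c * (s * deriv (genFun μ) s) ≤ a * genFun μ s) :
    DNonpos a c (ENNReal.ofReal s) μ := by
  rw [DNonpos, tiltedMass_ofReal hs.le hF]
  refine ⟨ENNReal.ofReal_ne_top, ?_⟩
  calc c * tiltedMean μ (ENNReal.ofReal s) ≤ c * ENNReal.ofReal (s * deriv (genFun μ) s) := by
        gcongr
        exact tiltedMean_ofReal_le hs hF hd
    _ = ENNReal.ofReal (c * (s * deriv (genFun μ) s)) := by
        rw [ENNReal.ofReal_mul (Nat.cast_nonneg _), ENNReal.ofReal_natCast]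
    _ ≤ ENNReal.ofReal (a * genFun μ s) := ENNReal.ofReal_le_ofReal hD
    _ = a * ENNReal.ofReal (genFun μ s) := by
        rw [ENNReal.ofReal_mul (Nat.cast_nonneg _), ENNReal.ofReal_natCast]

end GenFun

lemma ENNReal.tendsto_div_pow_atTop_nhds_zero {x : ℕ → ℝ≥0∞} {C r : ℝ≥0∞} (hC : C ≠ ⊤)
    (hx : ∀ n, x n ≤ C) (hr : 1 < r) : Tendsto (fun n => x n / r ^ n) atTop (nhds 0) := by
  have hlim : Tendsto (fun n => C * r⁻¹ ^ n) atTop (nhds 0) := by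
    simpa using ENNReal.Tendsto.const_mul
      (ENNReal.tendsto_pow_atTop_nhds_zero_of_lt_one (ENNReal.inv_lt_one.mpr hr)) (Or.inr hC)
  refine tendsto_of_tendsto_of_tendsto_of_le_of_le tendsto_const_nhds hlim (fun _ => zero_le)
    fun n => ?_
  rw [div_eq_mul_inv, ← ENNReal.inv_pow]
  exact mul_le_mul_left (hx n) _

theorem dr_subcritical_general (ν μ0 : PMF ℕ) (a M : ℕ) (ha : 1 ≤ a) (hM : 2 ≤ M)
    (hbd : ∀ k, M < k → ν k = 0) (hm1 : 1 < pmfMean ν)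
    (s0 : ℝ) (hs0 : s0 = 1 + ((M : ℝ) - 1) / (a : ℝ))
    (hF0 : Summable fun k : ℕ => (μ0 k).toReal * s0 ^ k)
    (hd0 : DifferentiableAt ℝ (genFun μ0) s0)
    (hD0 : ((M : ℝ) - 1) * s0 * deriv (genFun μ0) s0 - a * genFun μ0 s0 < 0) :
    Tendsto (fun n => pmfMean (drSeq ν μ0 a n) / pmfMean ν ^ n) atTop (nhds (0 : ℝ≥0∞)) := by
  obtain ⟨c, rfl⟩ : ∃ c, M = c + 1 := ⟨M - 1, by omega⟩
  have ha0 : a ≠ 0 := by omega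
  have hc : ((c + 1 : ℕ) : ℝ) - 1 = c := by push_cast; ring
  rw [hc] at hs0 hD0
  have hs0_pos : 0 < s0 := by rw [hs0]; positivity
  have ht : ENNReal.ofReal s0 = 1 + c / a := by
    rw [hs0, ENNReal.ofReal_add zero_le_one (by positivity), ENNReal.ofReal_one,
      ENNReal.ofReal_div_of_pos (by exact_mod_cast ha), ENNReal.ofReal_natCast,
      ENNReal.ofReal_natCast]
  have h0 : DNonpos a c (ENNReal.ofReal s0) μ0 := dNonpos_ofReal hs0_pos hF0 hd0 (by linarith)
  refine ENNReal.tendsto_div_pow_atTop_nhds_zero (ENNReal.natCast_ne_top a) (fun n => ?_) hm1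
  calc pmfMean (drSeq ν μ0 a n) ≤ c * pmfMean (drSeq ν μ0 a n) :=
        le_mul_of_one_le_left zero_le (by exact_mod_cast (by omega : 1 ≤ c))
    _ ≤ a := (h0.drSeq ha0 ht hbd n).mul_pmfMean_le (ht ▸ le_self_add)

/-- subcriticality: with `N ≤ M` a.s., if
`(M−1)s₀F'_0(s₀) − aF_0(s₀) < 0` where `s₀ = 1 + (M−1)/a`, then
`Q = lim_n E[X_n]/(E[N])^n = 0`. -/
theorem dr_subcritical (ν μ0 : PMF ℕ) (a M : ℕ) (ha : 1 ≤ a) (hM : 2 ≤ M)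
    (hν0 : ν 0 = 0) (hbd : ∀ k, M < k → ν k = 0) (hm1 : 1 < pmfMean ν)
    (s0 : ℝ) (hs0 : s0 = 1 + ((M : ℝ) - 1) / (a : ℝ))
    (hF0 : Summable fun k : ℕ => (μ0 k).toReal * s0 ^ k)
    (hF0' : Summable fun k : ℕ => (μ0 k).toReal * (k * s0 ^ k))
    (hd0 : DifferentiableAt ℝ (genFun μ0) s0)
    (hD0 : ((M : ℝ) - 1) * s0 * deriv (genFun μ0) s0 - a * genFun μ0 s0 < 0) :
    Tendsto (fun n => pmfMean (drSeq ν μ0 a n) / pmfMean ν ^ n) atTop (nhds (0 : ℝ≥0∞)) :=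
  dr_subcritical_general ν μ0 a M ha hM hbd hm1 s0 hs0 hF0 hd0 hD0
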